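/- Let F : X → ℝ be a non-decreasing, differentiable, DR-submodular function on a compact rectangle X = ∏_{i=1}^n [ℓ_i, u_i]. Then for every x ∈ X, the pointwise infimum over support points equals F: inf_{x̂ ∈ X} F̃(x; x̂) = F(x), and the infimum is attained at x̂ = x. -/

import Mathlib

/-!
Fix a support point `x̂` and put `δ = (x - x̂)⁺`, so that `x ≤ x̂ + δ = x ⊔ x̂`. Monotonicity gives
`F x ≤ F (x̂ + δ)`. Raising the coordinates of `x̂` one at a time, submodularity bounds the total
increment `F (x̂ + δ) - F x̂` by the sum of the single-coordinate increments
`F (x̂ + δᵢ eᵢ) - F x̂`, and concavity along each coordinate bounds each of these by its tangent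
`∂ᵢF(x̂) δᵢ`. Hence `F x ≤ F̃(x; x̂)`, with equality at `x̂ = x`.
-/

theorem ConcaveOn.le_add_mul_sub_of_hasDerivAt {S : Set ℝ} {g : ℝ → ℝ} {a b g' : ℝ}
    (hg : ConcaveOn ℝ S g) (ha : a ∈ S) (hb : b ∈ S) (hg' : HasDerivAt g g' a) :
    g b ≤ g a + g' * (b - a) := by
  rcases lt_trichotomy a b with hab | rfl | hba
  · have hslope := hg.slope_le_of_hasDerivAt ha hb hab hg'
    rw [slope_def_field, div_le_iff₀ (sub_pos.2 hab)] at hslope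
    linarith
  · simp
  · have hslope := hg.le_slope_of_hasDerivAt hb ha hba hg'
    rw [slope_def_field, le_div_iff₀ (sub_pos.2 hba)] at hslope
    linarith

section Coordinates

variable {ι : Type*} [Fintype ι] [DecidableEq ι]

theorem DifferentiableAt.hasDerivAt_add_single {F : (ι → ℝ) → ℝ} {x : ι → ℝ}
    (hF : DifferentiableAt ℝ F x) (i : ι) :
    HasDerivAt (fun t : ℝ => F (x + Pi.single i t)) (fderiv ℝ F x (Pi.single i 1)) 0 := by
  have hline : HasDerivAt (fun t : ℝ => x + t • Pi.single i (1 : ℝ)) (Pi.single i 1) 0 := by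
    simpa using ((hasDerivAt_id (0 : ℝ)).smul_const (Pi.single i (1 : ℝ))).const_add x
  have hF' : HasFDerivAt F (fderiv ℝ F x) (x + (0 : ℝ) • Pi.single i (1 : ℝ)) := by
    simpa using hF.hasFDerivAt
  simpa [Function.comp_def, ← Pi.single_smul'] using hF'.comp_hasDerivAt 0 hline

theorem le_add_fderiv_single_mul {s : Set (ι → ℝ)} {F : (ι → ℝ) → ℝ} {x : ι → ℝ} {i : ι}
    {t : ℝ} (hconc : ConcaveOn ℝ {t : ℝ | x + Pi.single i t ∈ s} (fun t => F (x + Pi.single i t)))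
    (hx : x ∈ s) (ht : x + Pi.single i t ∈ s) (hF : DifferentiableAt ℝ F x) :
    F (x + Pi.single i t) ≤ F x + fderiv ℝ F x (Pi.single i 1) * t := by
  simpa using hconc.le_add_mul_sub_of_hasDerivAt (a := 0) (by simpa using hx) ht
    (hF.hasDerivAt_add_single i)

end Coordinates

section Submodular

variable {ι : Type*} [DecidableEq ι] {s : Set (ι → ℝ)} [s.OrdConnected] {x δ : ι → ℝ}

theorem add_sum_single_mem (hδ : 0 ≤ δ) (hx : x ∈ s) (hxδ : x + δ ∈ s) (T : Finset ι) :
    x + ∑ i ∈ T, Pi.single i (δ i) ∈ s := by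
  have hδ' : ∀ j, 0 ≤ δ j := hδ
  refine Set.Icc_subset s hx hxδ ⟨fun j => ?_, fun j => ?_⟩ <;>
    by_cases hj : j ∈ T <;> simp [hj, hδ']

theorem submodular_add_sum_single_le {F : (ι → ℝ) → ℝ}
    (hsub : ∀ x ∈ s, ∀ y ∈ s, F (x ⊔ y) + F (x ⊓ y) ≤ F x + F y)
    (hδ : 0 ≤ δ) (hx : x ∈ s) (hxδ : x + δ ∈ s) (S : Finset ι) :
    F (x + ∑ i ∈ S, Pi.single i (δ i)) - F x ≤ ∑ i ∈ S, (F (x + Pi.single i (δ i)) - F x) := by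
  have hδ' : ∀ j, 0 ≤ δ j := hδ
  induction S using Finset.induction with
  | empty => simp
  | @insert a S ha ih =>
    have hsup : (x + Pi.single a (δ a)) ⊔ (x + ∑ i ∈ S, Pi.single i (δ i))
        = x + ∑ i ∈ insert a S, Pi.single i (δ i) := by
      ext j
      rcases eq_or_ne j a with rfl | hj
      · simp [ha, hδ']
      · by_cases hjS : j ∈ S <;> simp [hj, hjS, hδ']
    have hinf : (x + Pi.single a (δ a)) ⊓ (x + ∑ i ∈ S, Pi.single i (δ i)) = x := by
      ext j
      rcases eq_or_ne j a with rfl | hj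
      · simp [ha, hδ']
      · by_cases hjS : j ∈ S <;> simp [hj, hjS, hδ']
    have hstep := hsub _ (by simpa using add_sum_single_mem hδ hx hxδ {a}) _
      (add_sum_single_mem hδ hx hxδ S)
    rw [hsup, hinf] at hstep
    simp only [Finset.sum_insert ha] at hstep ⊢
    linarith

end Submodular

theorem stmt_5_general {n : ℕ} (ℓ u : Fin n → ℝ)
    (F : (Fin n → ℝ) → ℝ) (hdiff : Differentiable ℝ F)
    (hsub : ∀ x ∈ Set.Icc ℓ u, ∀ y ∈ Set.Icc ℓ u, F (x ⊔ y) + F (x ⊓ y) ≤ F x + F y)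
    (hconc : ∀ (i : Fin n), ∀ x ∈ Set.Icc ℓ u,
      ConcaveOn ℝ {t : ℝ | x + Pi.single i t ∈ Set.Icc ℓ u}
        (fun t : ℝ => F (x + Pi.single i t)))
    (hmono : ∀ x ∈ Set.Icc ℓ u, ∀ y ∈ Set.Icc ℓ u, x ≤ y → F x ≤ F y)
    (x : Fin n → ℝ) (hx : x ∈ Set.Icc ℓ u) :
    IsLeast {v : ℝ | ∃ xh ∈ Set.Icc ℓ u,
        v = F xh + ∑ i : Fin n, fderiv ℝ F xh (Pi.single i 1) * max (x i - xh i) 0}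
      (F x)
    ∧ F x + ∑ i : Fin n, fderiv ℝ F x (Pi.single i 1) * max (x i - x i) 0 = F x := by
  have hattain : F x + ∑ i : Fin n, fderiv ℝ F x (Pi.single i 1) * max (x i - x i) 0 = F x := by
    simp
  refine ⟨⟨⟨x, hx, hattain.symm⟩, ?_⟩, hattain⟩
  rintro v ⟨xh, hxh, rfl⟩
  set δ : Fin n → ℝ := fun i => max (x i - xh i) 0
  have hδ : 0 ≤ δ := fun i => le_max_right _ _
  have hxhδ : xh + δ = x ⊔ xh := by
    ext i
    simp [δ, add_max]
  have hmemδ : xh + δ ∈ Set.Icc ℓ u := hxhδ ▸ ⟨le_sup_of_le_left hx.1, sup_le hx.2 hxh.2⟩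
  have htangent (i : Fin n) :
      F (xh + Pi.single i (δ i)) - F xh ≤ fderiv ℝ F xh (Pi.single i 1) * δ i := by
    have := le_add_fderiv_single_mul (hconc i xh hxh) hxh
      (by simpa using add_sum_single_mem hδ hxh hmemδ {i}) (hdiff xh)
    linarith
  calc F x ≤ F (xh + δ) := hmono x hx _ hmemδ (hxhδ ▸ le_sup_left)
    _ ≤ F xh + ∑ i, (F (xh + Pi.single i (δ i)) - F xh) := by
      have := submodular_add_sum_single_le hsub hδ hxh hmemδ Finset.univ
      rw [Finset.univ_sum_single] at this
      linarith
    _ ≤ _ := by gcongr with i; exact htangent i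

/-- the pointwise infimum of the gradient-based estimators is a perfect
estimator. For a non-decreasing, differentiable, DR-submodular function `F` on the compact
rectangle `X = Icc ℓ u`, for every `x ∈ X`, `F x` is the least value of
`F̃(x; x̂) = F x̂ + ∑ i (∂F/∂x_i)(x̂) · [x_i − x̂_i]⁺` over support points `x̂ ∈ X`
(so the infimum equals `F x`), and the infimum is attained at `x̂ = x`
(i.e. `F̃(x; x) = F x`). -/
theorem stmt_5 {n : ℕ} (hn : 1 ≤ n) (ℓ u : Fin n → ℝ) (hlu : ∀ i, ℓ i < u i)
    (F : (Fin n → ℝ) → ℝ) (hdiff : Differentiable ℝ F)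
    (hsub : ∀ x ∈ Set.Icc ℓ u, ∀ y ∈ Set.Icc ℓ u, F (x ⊔ y) + F (x ⊓ y) ≤ F x + F y)
    (hconc : ∀ (i : Fin n), ∀ x ∈ Set.Icc ℓ u,
      ConcaveOn ℝ {t : ℝ | x + Pi.single i t ∈ Set.Icc ℓ u}
        (fun t : ℝ => F (x + Pi.single i t)))
    (hmono : ∀ x ∈ Set.Icc ℓ u, ∀ y ∈ Set.Icc ℓ u, x ≤ y → F x ≤ F y)
    (x : Fin n → ℝ) (hx : x ∈ Set.Icc ℓ u) :
    IsLeast {v : ℝ | ∃ xh ∈ Set.Icc ℓ u,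
        v = F xh + ∑ i : Fin n, fderiv ℝ F xh (Pi.single i 1) * max (x i - xh i) 0}
      (F x)
    ∧ F x + ∑ i : Fin n, fderiv ℝ F x (Pi.single i 1) * max (x i - x i) 0 = F x :=
  stmt_5_general ℓ u F hdiff hsub hconc hmono x hx
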